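/- For all sufficiently large N the following holds. Let Ĥ = Ĥ(m₀; m₁, m₂, 0) be the graph on vertex set W partitioned into disjoint sets Z₀, Z₁, Z₂ of sizes m₀, m₁, m₂, whose edges are all pairs of vertices in two different parts together with all pairs inside Z₀. Let J be a b'-dense subgraph of Ĥ where b' ≤ N/8 − 6√N, and suppose (i) m₀ + m₁ + m₂ ≤ N, (ii) m₀ + m₁/2 + m₂ ≥ 3N/4, (iii) m₂ ≤ N/4, and (iv) m₀ > N/2 − m₂ ≥ N/4. Suppose the edges of J are coloured with two colours and that in one of the colours there is a union F'₂ = (V'₂, E'₂) of connected components of that colour such that |W \ V'₂| ≥ N/4 and V'₂ ∩ Z₀ ≠ ∅. Then all vertices of V'₂ ∩ Z₀ are contained in one connected component F₃ = (V₃, E₃) of the other colour, and |Z₀ \ V₃| ≤ N/8. -/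

import Mathlib

open SimpleGraph

/-- The graph Ĥ(m₀; m₁, m₂, 0) on a vertex set partitioned into parts `Z 0, Z 1, Z 2`:
its edges are all pairs of vertices lying in two different parts together with all pairs
inside `Z 0`. -/
def hatH3 {V : Type*} (Z : Fin 3 → Set V) : SimpleGraph V where
  Adj u v := u ≠ v ∧ ((u ∈ Z 0 ∧ v ∈ Z 0) ∨ ∃ i j : Fin 3, i ≠ j ∧ u ∈ Z i ∧ v ∈ Z j)
  symm := by
    constructor
    rintro u v ⟨hne, h⟩
    refine ⟨hne.symm, ?_⟩
    rcases h with ⟨h1, h2⟩ | ⟨i, j, hij, hi, hj⟩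
    · exact Or.inl ⟨h2, h1⟩
    · exact Or.inr ⟨j, i, hij.symm, hj, hi⟩
  loopless := ⟨fun v h => h.1 rfl⟩

/-- The subgraph of `J` spanned by the edges of colour `i` under the 2-edge-colouring `c`. -/
def colourGraph2 {V : Type*} (J : SimpleGraph V) (c : Sym2 V → Fin 2) (i : Fin 2) :
    SimpleGraph V where
  Adj u v := J.Adj u v ∧ c s(u, v) = i
  symm := ⟨fun u v h => ⟨h.1.symm, by rw [Sym2.eq_swap]; exact h.2⟩⟩
  loopless := ⟨fun v h => J.loopless.irrefl v h.1⟩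

/-! Every vertex of `Z₀` is adjacent in `Ĥ` to all other vertices, and misses fewer than `N/8`
of them in `J`. A `J`-edge leaving `V'₂` cannot have the colour of `F'₂`. Hence two vertices of
`V'₂ ∩ Z₀` have a common `J`-neighbour among the at least `N/4` vertices outside `V'₂`, and both
edges to it have the other colour. Fix `v₀ ∈ V'₂ ∩ Z₀` and let `F₃` be its component of the
other colour. A `J`-neighbour of `v₀` in `Z₀` lies in `V'₂`, or is joined to `v₀` by an edge of
the other colour; either way it lies in `F₃`, so `Z₀ \ V₃` consists of non-neighbours of `v₀`. -/

variable {V : Type*}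

namespace SimpleGraph

theorem ncard_sdiff_neighborSet_lt [Finite V] {H J : SimpleGraph V} (hJH : J ≤ H) {b : ℝ}
    {v : V} (hdense : ((H.neighborSet v).ncard : ℝ) < (J.neighborSet v).ncard + b) :
    (((H \ J).neighborSet v).ncard : ℝ) < b := by
  have hsplit : ((H \ J).neighborSet v).ncard + (J.neighborSet v).ncard =
      (H.neighborSet v).ncard :=
    Set.ncard_sdiff_add_ncard_of_subset fun u (hu : J.Adj v u) => hJH hu
  have hsplit' : (((H \ J).neighborSet v).ncard : ℝ) + (J.neighborSet v).ncard =
      (H.neighborSet v).ncard := by exact_mod_cast hsplit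
  linarith

theorem exists_common_adj_of_ncard_lt [Finite V] {H J : SimpleGraph V} {U : Set V} {v w : V}
    (hv : U ⊆ H.neighborSet v) (hw : U ⊆ H.neighborSet w)
    (hcard : ((H \ J).neighborSet v).ncard + ((H \ J).neighborSet w).ncard < U.ncard) :
    ∃ u ∈ U, J.Adj v u ∧ J.Adj w u := by
  obtain ⟨u, huU, hu⟩ := Set.exists_mem_notMem_of_ncard_lt_ncard <|
    (Set.ncard_union_le _ _).trans_lt hcard
  simp only [Set.mem_union, neighborSet_sdiff, Set.mem_sdiff, not_or, not_and_not_right] at hu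
  exact ⟨u, huU, hu.1 (hv huU), hu.2 (hw huU)⟩

theorem mem_iUnion_supp_of_adj {G : SimpleGraph V} {𝒦 : Set G.ConnectedComponent} {v u : V}
    (hv : v ∈ ⋃ K ∈ 𝒦, K.supp) (hadj : G.Adj v u) : u ∈ ⋃ K ∈ 𝒦, K.supp := by
  obtain ⟨K, hK, hvK⟩ := Set.mem_iUnion₂.1 hv
  exact Set.mem_iUnion₂.2 ⟨K, hK, (K.mem_supp_congr_adj hadj).1 hvK⟩

end SimpleGraph

theorem hatH3_adj_of_mem_zero {Z : Fin 3 → Set V} (hcover : ⋃ i, Z i = Set.univ) {v u : V}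
    (hv : v ∈ Z 0) (huv : u ≠ v) : (hatH3 Z).Adj v u := by
  obtain ⟨k, hk⟩ := Set.mem_iUnion.1 (hcover ▸ Set.mem_univ u)
  refine ⟨huv.symm, ?_⟩
  by_cases hk0 : k = 0
  · exact Or.inl ⟨hv, hk0 ▸ hk⟩
  · exact Or.inr ⟨0, k, Ne.symm hk0, hv, hk⟩

section TwoColours

variable {J : SimpleGraph V} {c : Sym2 V → Fin 2} {i j : Fin 2}
  {𝒦 : Set (colourGraph2 J c i).ConnectedComponent}

theorem colourGraph2_adj_of_not_adj (hij : i ≠ j) {u v : V} (hadj : J.Adj u v)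
    (hi : ¬(colourGraph2 J c i).Adj u v) : (colourGraph2 J c j).Adj u v := by
  refine ⟨hadj, ?_⟩
  have hc : c s(u, v) ≠ i := fun h => hi ⟨hadj, h⟩
  omega

theorem colourGraph2_adj_of_mem_iUnion_supp (hij : i ≠ j) {v u : V}
    (hv : v ∈ ⋃ K ∈ 𝒦, K.supp) (hu : u ∉ ⋃ K ∈ 𝒦, K.supp) (hadj : J.Adj v u) :
    (colourGraph2 J c j).Adj v u :=
  colourGraph2_adj_of_not_adj hij hadj fun hi => hu (mem_iUnion_supp_of_adj hv hi)

theorem reachable_of_ncard_compl_gt [Finite V] {H : SimpleGraph V} (hij : i ≠ j) {v w : V}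
    (hv : v ∈ ⋃ K ∈ 𝒦, K.supp) (hw : w ∈ ⋃ K ∈ 𝒦, K.supp)
    (hHv : (⋃ K ∈ 𝒦, K.supp)ᶜ ⊆ H.neighborSet v) (hHw : (⋃ K ∈ 𝒦, K.supp)ᶜ ⊆ H.neighborSet w)
    (hcard : ((H \ J).neighborSet v).ncard + ((H \ J).neighborSet w).ncard <
      (⋃ K ∈ 𝒦, K.supp)ᶜ.ncard) :
    (colourGraph2 J c j).Reachable v w := by
  obtain ⟨u, hu, hvu, hwu⟩ := exists_common_adj_of_ncard_lt hHv hHw hcard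
  exact (colourGraph2_adj_of_mem_iUnion_supp hij hv hu hvu).reachable.trans
    (colourGraph2_adj_of_mem_iUnion_supp hij hw hu hwu).reachable.symm

theorem diff_supp_subset_sdiff_neighborSet {H : SimpleGraph V} (hij : i ≠ j) {T : Set V}
    {v₀ : V} (hv₀ : v₀ ∈ ⋃ K ∈ 𝒦, K.supp) (hH : ∀ w ∈ T, w ≠ v₀ → H.Adj v₀ w)
    (hreach : ∀ w ∈ (⋃ K ∈ 𝒦, K.supp) ∩ T, (colourGraph2 J c j).Reachable v₀ w) :
    T \ ((colourGraph2 J c j).connectedComponentMk v₀).supp ⊆ (H \ J).neighborSet v₀ := by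
  rintro w ⟨hwT, hwK⟩
  have hwv₀ : w ≠ v₀ := by rintro rfl; exact hwK rfl
  refine ⟨hH w hwT hwv₀, fun hadj => hwK ?_⟩
  by_cases hw : w ∈ ⋃ K ∈ 𝒦, K.supp
  · exact ConnectedComponent.sound (hreach w ⟨hw, hwT⟩).symm
  · exact ConnectedComponent.sound
      (colourGraph2_adj_of_mem_iUnion_supp hij hv₀ hw hadj).symm.reachable

end TwoColours

/-- Claim 9 of the paper: with the setup of Lemma 8 (m₃ = 0), if in one of the two colours
there is a union F'₂ of components with |W \ V'₂| ≥ N/4 and V'₂ ∩ Z₀ ≠ ∅, then all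
vertices of V'₂ ∩ Z₀ lie in one component K₃ of the other colour, and |Z₀ \ V₃| ≤ N/8. -/
theorem stmt18 :
    ∃ N₀ : ℕ, ∀ N : ℕ, N₀ ≤ N →
      ∀ (V : Type) [Fintype V], ∀ (Z : Fin 3 → Set V) (m : Fin 3 → ℕ) (b' : ℝ),
        (⋃ i, Z i) = Set.univ →
        (∀ i j : Fin 3, i ≠ j → Disjoint (Z i) (Z j)) →
        (∀ i, (Z i).ncard = m i) →
        b' ≤ (N : ℝ) / 8 - 6 * Real.sqrt N →
        ∀ J : SimpleGraph V, J ≤ hatH3 Z →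
          (∀ v : V, (((hatH3 Z).neighborSet v).ncard : ℝ) < (J.neighborSet v).ncard + b') →
          m 0 + m 1 + m 2 ≤ N →
          3 * (N : ℝ) / 4 ≤ (m 0 : ℝ) + (m 1 : ℝ) / 2 + m 2 →
          (m 2 : ℝ) ≤ (N : ℝ) / 4 →
          ((N : ℝ) / 2 - m 2 < m 0 ∧ (N : ℝ) / 4 ≤ (N : ℝ) / 2 - m 2) →
          ∀ c : Sym2 V → Fin 2, ∀ i j : Fin 2, i ≠ j →
            ∀ (𝒦 : Set ((colourGraph2 J c i).ConnectedComponent)) (V₂' : Set V),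
              V₂' = ⋃ K ∈ 𝒦, K.supp →
              (N : ℝ) / 4 ≤ ((V₂'ᶜ).ncard : ℝ) →
              (V₂' ∩ Z 0).Nonempty →
              ∃ K₃ : (colourGraph2 J c j).ConnectedComponent,
                V₂' ∩ Z 0 ⊆ K₃.supp ∧ ((Z 0 \ K₃.supp).ncard : ℝ) ≤ (N : ℝ) / 8 := by
  refine ⟨0, fun N _ V _ Z m b' hcover _ _ hb' J hJH hdense _ _ _ _ c i j hij 𝒦 V₂' hV₂' hVc hne
    => ?_⟩
  subst hV₂'
  have hmissing : ∀ v, (((hatH3 Z \ J).neighborSet v).ncard : ℝ) < N / 8 := fun v =>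
    (ncard_sdiff_neighborSet_lt hJH (hdense v)).trans_le <| hb'.trans <| by
      linarith [Real.sqrt_nonneg N]
  have hcompl : ∀ v ∈ (⋃ K ∈ 𝒦, K.supp) ∩ Z 0,
      (⋃ K ∈ 𝒦, K.supp)ᶜ ⊆ (hatH3 Z).neighborSet v :=
    fun v hv u hu => hatH3_adj_of_mem_zero hcover hv.2 fun h => hu (h ▸ hv.1)
  obtain ⟨v₀, hv₀⟩ := hne
  have hreach : ∀ w ∈ (⋃ K ∈ 𝒦, K.supp) ∩ Z 0, (colourGraph2 J c j).Reachable v₀ w :=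
    fun w hw => reachable_of_ncard_compl_gt hij hv₀.1 hw.1 (hcompl v₀ hv₀) (hcompl w hw) <|
      (Nat.cast_lt (α := ℝ)).1 (by push_cast; linarith [hmissing v₀, hmissing w])
  refine ⟨(colourGraph2 J c j).connectedComponentMk v₀,
    fun w hw => ConnectedComponent.sound (hreach w hw).symm, ?_⟩
  calc ((Z 0 \ ((colourGraph2 J c j).connectedComponentMk v₀).supp).ncard : ℝ)
      ≤ ((hatH3 Z \ J).neighborSet v₀).ncard := by
        exact_mod_cast Set.ncard_le_ncard <| diff_supp_subset_sdiff_neighborSet hij hv₀.1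
          (fun _ _ hw => hatH3_adj_of_mem_zero hcover hv₀.2 hw) hreach
    _ ≤ N / 8 := (hmissing v₀).le
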